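/- Let K be a compact subset of a Banach space X and γ_n = 2^{φ(n)}. If d_n^{γ_n}(K)_X < ε/2 for some ε > 0, then ε_r(K)_X ≤ ε for every r ≥ ⌈n(φ(n) + log₂(6/ε))⌉. -/

import Mathlib

/-!
If `L` is `γ`-Lipschitz on the unit ball of an `n`-dimensional normed space and every point of `K`
is within `ε/2` of its image, then `L` maps a `δ`-net of the ball, `δ = ε/(2γ)`, to an `ε`-net
of `K`. Disjoint balls of radius `δ/2` around a maximal `δ`-separated subset of the unit ball fit in
the ball of radius `1 + δ/2`, so comparing Haar volumes gives such a net with at most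
`(1 + 2/δ)^n ≤ (6γ/ε)^n` points, and `(6γ/ε)^n ≤ 2^r` once `r ≥ n (φ(n) + log₂(6/ε))`.
-/

/-- `N` is a norm on `ℝ^n`. -/
def IsNorm {n : ℕ} (N : (Fin n → ℝ) → ℝ) : Prop :=
  (∀ y, N y = 0 ↔ y = 0) ∧ (∀ (a : ℝ) (y), N (a • y) = |a| * N y) ∧
    (∀ y z, N (y + z) ≤ N y + N z)

variable {X : Type*} [NormedAddCommGroup X] [NormedSpace ℝ X] [CompleteSpace X]

/-- The fixed Lipschitz width `d^γ(K, Y_n)_X` for the norm `N` on `ℝ^n`. -/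
noncomputable def fixedLipWidth {n : ℕ} (K : Set X) (N : (Fin n → ℝ) → ℝ) (γ : ℝ) : ℝ :=
  ⨅ L : {L : (Fin n → ℝ) → X //
      ∀ y y', N y ≤ 1 → N y' ≤ 1 → ‖L y - L y'‖ ≤ γ * N (y - y')},
    ⨆ f : K, ⨅ y : {y : Fin n → ℝ // N y ≤ 1}, ‖(f : X) - L.1 y.1‖

/-- The Lipschitz width `d_n^γ(K)_X`. -/
noncomputable def lipWidth (K : Set X) (n : ℕ) (γ : ℝ) : ℝ :=
  ⨅ N : {N : (Fin n → ℝ) → ℝ // IsNorm N}, fixedLipWidth K N.1 γ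

/-- The entropy number `ε_n(K)_X`. -/
noncomputable def entropyNum (K : Set X) (n : ℕ) : ℝ :=
  sInf {ε : ℝ | 0 < ε ∧ ∃ g : Fin (2 ^ n) → X, K ⊆ ⋃ j, Metric.closedBall (g j) ε}

/-- The Chebyshev radius of `K`. -/
noncomputable def chebRad (K : Set X) : ℝ :=
  ⨅ g : X, ⨆ f : K, ‖g - (f : X)‖

open Metric Module MeasureTheory
open scoped NNReal ENNReal

theorem isNorm_norm {n : ℕ} : IsNorm fun y : Fin n → ℝ ↦ ‖y‖ :=
  ⟨fun _ ↦ norm_eq_zero, fun a y ↦ by simp [norm_smul], norm_add_le⟩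

namespace IsNorm

variable {n : ℕ} {N : (Fin n → ℝ) → ℝ}

theorem map_zero (hN : IsNorm N) : N 0 = 0 := (hN.1 0).2 rfl

theorem nonneg (hN : IsNorm N) (y : Fin n → ℝ) : 0 ≤ N y := by
  have hneg : N (-y) = N y := by simpa using hN.2.1 (-1) y
  have := hN.2.2 y (-y)
  rw [add_neg_cancel, hN.map_zero, hneg] at this
  linarith

/-- `ℝⁿ` normed by `N`; a type synonym, since `Fin n → ℝ` already carries the sup norm. -/
def Space (_ : IsNorm N) : Type := Fin n → ℝ

variable {hN : IsNorm N}

instance : AddCommGroup hN.Space := inferInstanceAs (AddCommGroup (Fin n → ℝ))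
instance : Module ℝ hN.Space := inferInstanceAs (Module ℝ (Fin n → ℝ))
instance : Norm hN.Space := ⟨N⟩

theorem Space.normedSpaceCore : NormedSpace.Core ℝ hN.Space where
  norm_nonneg := hN.nonneg
  norm_smul c y := by rw [Real.norm_eq_abs]; exact hN.2.1 c y
  norm_triangle := hN.2.2
  norm_eq_zero_iff := hN.1

noncomputable instance : NormedAddCommGroup hN.Space := .ofCore Space.normedSpaceCore
noncomputable instance : NormedSpace ℝ hN.Space := .ofCore Space.normedSpaceCore
instance : FiniteDimensional ℝ hN.Space := inferInstanceAs (FiniteDimensional ℝ (Fin n → ℝ))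

theorem Space.finrank_eq : finrank ℝ hN.Space = n := finrank_fin_fun ℝ

end IsNorm

section FiniteDimensional

variable {E : Type*} [NormedAddCommGroup E] [NormedSpace ℝ E] [FiniteDimensional ℝ E]

theorem Finset.card_le_of_isSeparated_of_subset_closedBall {S : Finset E} {δ : ℝ≥0}
    (hδ : 0 < δ) (hS : ↑S ⊆ closedBall (0 : E) 1) (hsep : IsSeparated δ (S : Set E)) :
    (S.card : ℝ) ≤ (1 + 2 / δ) ^ finrank ℝ E := by
  borelize E
  set μ : Measure E := Measure.addHaar
  have hdisj : (S : Set E).PairwiseDisjoint (closedBall · (δ / 2)) := fun s hs t ht hst ↦ by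
    refine closedBall_disjoint_closedBall ?_
    have : (δ : ℝ≥0∞) < edist s t := hsep hs ht hst
    rw [edist_nndist, ENNReal.coe_lt_coe, ← NNReal.coe_lt_coe, coe_nndist] at this
    linarith
  have hsub : ⋃ s ∈ S, closedBall s (δ / 2) ⊆ closedBall (0 : E) (1 + δ / 2) := by
    refine Set.iUnion₂_subset fun s hs ↦ closedBall_subset_closedBall' ?_
    rw [dist_zero_right, add_comm]
    gcongr
    simpa using hS hs
  have hvol : (S.card : ℝ≥0∞) * μ (closedBall 0 (δ / 2)) ≤ μ (closedBall 0 (1 + δ / 2)) :=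
    calc (S.card : ℝ≥0∞) * μ (closedBall 0 (δ / 2)) = ∑ s ∈ S, μ (closedBall s (δ / 2)) := by
          simp [Measure.addHaar_closedBall_center]
      _ = μ (⋃ s ∈ S, closedBall s (δ / 2)) :=
          (measure_biUnion_finset hdisj fun _ _ ↦ measurableSet_closedBall).symm
      _ ≤ _ := measure_mono hsub
  have hδ' : (0 : ℝ) < δ := hδ
  have hreal : (S.card : ℝ) * (δ / 2) ^ finrank ℝ E ≤ (1 + δ / 2) ^ finrank ℝ E := by
    rwa [Measure.addHaar_closedBall μ _ (by positivity),
      Measure.addHaar_closedBall μ _ (by positivity), ← mul_assoc,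
      ENNReal.mul_le_mul_iff_left (measure_ball_pos μ 0 one_pos).ne' measure_ball_lt_top.ne,
      ← ENNReal.ofReal_natCast, ← ENNReal.ofReal_mul (by positivity),
      ENNReal.ofReal_le_ofReal_iff (by positivity)] at hvol
  calc (S.card : ℝ) ≤ (1 + δ / 2) ^ finrank ℝ E / (δ / 2) ^ finrank ℝ E := by
        rwa [le_div_iff₀ (by positivity)]
    _ = (1 + 2 / δ) ^ finrank ℝ E := by
        rw [← div_pow]
        congr 1
        field_simp
        ring

theorem packingNumber_closedBall_le {δ : ℝ≥0} (hδ : 0 < δ) :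
    packingNumber δ (closedBall (0 : E) 1) ≤ ⌊(1 + 2 / δ : ℝ) ^ finrank ℝ E⌋₊ := by
  refine iSup₂_le fun C hC ↦ iSup_le fun hsep ↦ ?_
  by_contra! hlt
  obtain ⟨S, hSC, hScard⟩ := Set.exists_subset_encard_eq (Order.add_one_le_of_lt hlt)
  have hSfin : S.Finite := Set.finite_of_encard_eq_coe hScard
  have hcard := Finset.card_le_of_isSeparated_of_subset_closedBall (S := hSfin.toFinset) hδ
    (by simpa using hSC.trans hC) (by simpa using hsep.subset hSC)
  have hSsize : (hSfin.toFinset.card : ℕ∞) = ⌊(1 + 2 / δ : ℝ) ^ finrank ℝ E⌋₊ + 1 := by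
    rw [← hScard, hSfin.encard_eq_coe_toFinset_card]
  rw [show hSfin.toFinset.card = ⌊(1 + 2 / δ : ℝ) ^ finrank ℝ E⌋₊ + 1 by exact_mod_cast hSsize]
    at hcard
  exact (Nat.lt_floor_add_one _).not_ge (by exact_mod_cast hcard)

theorem exists_finset_closedBall_subset_iUnion_closedBall {δ : ℝ} (hδ : 0 < δ) :
    ∃ T : Finset E, ↑T ⊆ closedBall (0 : E) 1 ∧ closedBall (0 : E) 1 ⊆ ⋃ t ∈ T, closedBall t δ ∧
      (T.card : ℝ) ≤ max 1 ((3 / δ) ^ finrank ℝ E) := by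
  rcases le_or_gt 1 δ with hδ1 | hδ1
  · refine ⟨{0}, by simp, by simpa using closedBall_subset_closedBall hδ1, by simp⟩
  lift δ to ℝ≥0 using hδ.le
  have hcov : coveringNumber δ (closedBall (0 : E) 1) ≤ ⌊(1 + 2 / δ : ℝ) ^ finrank ℝ E⌋₊ :=
    (coveringNumber_le_packingNumber _ _).trans (packingNumber_closedBall_le hδ)
  obtain ⟨C, hCB, hCfin, hCcov, hCcard⟩ :=
    exists_set_encard_eq_coveringNumber (ne_top_of_le_ne_top (by simp) hcov)
  refine ⟨hCfin.toFinset, by simpa using hCB, by simpa using hCcov.subset_iUnion_closedBall,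
    le_max_of_le_right ?_⟩
  rw [← hCcard, ← hCfin.coe_toFinset, Set.encard_coe_eq_coe_finsetCard, Nat.cast_le] at hcov
  calc (hCfin.toFinset.card : ℝ) ≤ (1 + 2 / δ : ℝ) ^ finrank ℝ E :=
        (Nat.cast_le.2 hcov).trans (Nat.floor_le (by positivity))
    _ ≤ (3 / δ) ^ finrank ℝ E := by
        gcongr
        rw [le_div_iff₀ hδ, add_mul, div_mul_cancel₀ _ hδ.ne']
        linarith

theorem exists_finset_subset_iUnion_closedBall_of_lipschitzOnWith {Y : Type*}
    [PseudoMetricSpace Y] {L : E → Y} {γ : ℝ≥0} (hγ : 0 < γ)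
    (hL : LipschitzOnWith γ L (closedBall 0 1)) {K : Set Y} {η : ℝ} (hη : 0 < η)
    (hK : ∀ x ∈ K, ∃ y ∈ closedBall (0 : E) 1, dist x (L y) ≤ η) :
    ∃ T : Finset Y, K ⊆ ⋃ t ∈ T, closedBall t (2 * η) ∧
      (T.card : ℝ) ≤ max 1 ((3 * γ / η) ^ finrank ℝ E) := by
  classical
  have hγ' : (0 : ℝ) < γ := hγ
  obtain ⟨T, hTB, hBT, hTcard⟩ :=
    exists_finset_closedBall_subset_iUnion_closedBall (E := E) (div_pos hη hγ')
  refine ⟨T.image L, fun x hx ↦ ?_, ?_⟩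
  · obtain ⟨y, hyB, hxy⟩ := hK x hx
    obtain ⟨t, htT, hyt⟩ := Set.mem_iUnion₂.1 (hBT hyB)
    refine Set.mem_iUnion₂.2 ⟨L t, Finset.mem_image_of_mem L htT, ?_⟩
    calc dist x (L t) ≤ dist x (L y) + dist (L y) (L t) := dist_triangle _ _ _
      _ ≤ η + γ * (η / γ) := by
          gcongr
          exact (hL.dist_le_mul y hyB t (hTB htT)).trans (by gcongr; exact hyt)
      _ = 2 * η := by field_simp; ring
  · calc ((T.image L).card : ℝ) ≤ T.card := by exact_mod_cast Finset.card_image_le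
      _ ≤ _ := by rwa [div_div_eq_mul_div] at hTcard

end FiniteDimensional

theorem pow_le_pow_of_mul_logb_le {b x : ℝ} (hb : 1 < b) (hx : 0 < x) {n r : ℕ}
    (h : n * Real.logb b x ≤ r) : x ^ n ≤ b ^ r := by
  rwa [← Real.rpow_natCast b r, ← Real.logb_le_iff_le_rpow hb (by positivity), Real.logb_pow]

omit [NormedSpace ℝ X] [CompleteSpace X] in
theorem exists_isNorm_fixedLipWidth_lt_of_lipWidth_lt {K : Set X} {n : ℕ} {γ t : ℝ}
    (h : lipWidth K n γ < t) : ∃ N : (Fin n → ℝ) → ℝ, IsNorm N ∧ fixedLipWidth K N γ < t := by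
  have : Nonempty {N : (Fin n → ℝ) → ℝ // IsNorm N} := ⟨⟨_, isNorm_norm⟩⟩
  obtain ⟨⟨N, hN⟩, hlt⟩ := exists_lt_of_ciInf_lt h
  exact ⟨N, hN, hlt⟩

omit [NormedSpace ℝ X] [CompleteSpace X] in
theorem IsNorm.exists_lipschitzOnWith_approx {K : Set X} (hK : Bornology.IsBounded K) {n : ℕ}
    {N : (Fin n → ℝ) → ℝ} (hN : IsNorm N) {γ : ℝ≥0} {t : ℝ} (h : fixedLipWidth K N γ < t) :
    ∃ L : hN.Space → X, LipschitzOnWith γ L (closedBall 0 1) ∧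
      ∀ f ∈ K, ∃ y ∈ closedBall (0 : hN.Space) 1, dist f (L y) < t := by
  have : Nonempty {L : (Fin n → ℝ) → X //
      ∀ y y', N y ≤ 1 → N y' ≤ 1 → ‖L y - L y'‖ ≤ γ * N (y - y')} :=
    ⟨⟨fun _ ↦ 0, fun y y' _ _ ↦ by simpa using mul_nonneg γ.2 (hN.nonneg _)⟩⟩
  obtain ⟨⟨L, hL⟩, hLt⟩ := exists_lt_of_ciInf_lt h
  have : Nonempty {y : Fin n → ℝ // N y ≤ 1} := ⟨⟨0, by simp [hN.map_zero]⟩⟩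
  obtain ⟨C, hC⟩ := hK.exists_norm_le
  have hbdd : BddAbove (Set.range fun f : K ↦
      ⨅ y : {y : Fin n → ℝ // N y ≤ 1}, ‖(f : X) - L y‖) := by
    refine ⟨C + ‖L 0‖, Set.forall_mem_range.2 fun f ↦ ?_⟩
    calc ⨅ y : {y : Fin n → ℝ // N y ≤ 1}, ‖(f : X) - L y‖ ≤ ‖(f : X) - L 0‖ :=
          ciInf_le ⟨0, Set.forall_mem_range.2 fun _ ↦ norm_nonneg _⟩
            (⟨0, by simp [hN.map_zero]⟩ : {y // N y ≤ 1})
      _ ≤ C + ‖L 0‖ := (norm_sub_le _ _).trans (by gcongr; exact hC f f.2)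
  refine ⟨L, LipschitzOnWith.of_dist_le_mul fun y hy y' hy' ↦ ?_, fun f hf ↦ ?_⟩
  · rw [dist_eq_norm, dist_eq_norm]
    exact hL y y' (mem_closedBall_zero_iff.1 hy) (mem_closedBall_zero_iff.1 hy')
  · obtain ⟨⟨y, hy⟩, hyt⟩ := exists_lt_of_ciInf_lt ((le_ciSup hbdd ⟨f, hf⟩).trans_lt hLt)
    exact ⟨y, mem_closedBall_zero_iff.2 hy, by rwa [dist_eq_norm]⟩

omit [NormedSpace ℝ X] [CompleteSpace X] in
theorem entropyNum_le_of_subset_iUnion_closedBall {K : Set X} {r : ℕ} {ε : ℝ} (hε : 0 < ε)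
    (T : Finset X) (hT : T.card ≤ 2 ^ r) (hK : K ⊆ ⋃ t ∈ T, closedBall t ε) :
    entropyNum K r ≤ ε := by
  let g : Fin (2 ^ r) → X := Function.extend (Fin.castLE hT) (fun i ↦ (T.equivFin.symm i : X)) 0
  refine csInf_le ⟨0, fun _ hδ ↦ hδ.1.le⟩ ⟨hε, g, hK.trans (Set.iUnion₂_subset fun t ht ↦ ?_)⟩
  refine Set.subset_iUnion_of_subset (Fin.castLE hT (T.equivFin ⟨t, ht⟩)) ?_
  simp only [g, (Fin.castLE_injective hT).extend_apply, Equiv.symm_apply_apply, subset_refl]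

/-- if `d_n^{2^{φ(n)}}(K)_X < ε/2` then `ε_r(K)_X ≤ ε` for every
`r ≥ ⌈n(φ(n) + log₂(6/ε))⌉`. -/
theorem entropy_le_of_lipWidth_lt (K : Set X) (hK : IsCompact K)
    (φ : ℕ → ℝ) (n : ℕ) (ε : ℝ) (hε : 0 < ε)
    (h : lipWidth K n ((2 : ℝ) ^ φ n) < ε / 2) :
    ∀ r : ℕ, ⌈(n : ℝ) * (φ n + Real.logb 2 (6 / ε))⌉₊ ≤ r → entropyNum K r ≤ ε := by
  intro r hr
  let γ : ℝ≥0 := ⟨2 ^ φ n, by positivity⟩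
  have hγ : 0 < γ := Real.rpow_pos_of_pos two_pos _
  obtain ⟨N, hN, hNγ⟩ := exists_isNorm_fixedLipWidth_lt_of_lipWidth_lt (γ := γ) h
  obtain ⟨L, hL, hLK⟩ := hN.exists_lipschitzOnWith_approx hK.isBounded hNγ
  obtain ⟨T, hKT, hTcard⟩ := exists_finset_subset_iUnion_closedBall_of_lipschitzOnWith hγ hL
    (half_pos hε) fun f hf ↦ (hLK f hf).imp fun _ hy ↦ ⟨hy.1, hy.2.le⟩
  refine entropyNum_le_of_subset_iUnion_closedBall hε T ?_
    (by rwa [mul_div_cancel₀ _ two_ne_zero] at hKT)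
  have hlogγ : Real.logb 2 γ = φ n := Real.logb_rpow two_pos (by norm_num)
  have hlog : n * Real.logb 2 (3 * γ / (ε / 2)) ≤ r :=
    calc n * Real.logb 2 (3 * γ / (ε / 2)) = n * (φ n + Real.logb 2 (6 / ε)) := by
          rw [show 3 * (γ : ℝ) / (ε / 2) = γ * (6 / ε) by ring,
            Real.logb_mul (by positivity) (by positivity), hlogγ]
      _ ≤ r := (Nat.le_ceil _).trans (by exact_mod_cast hr)
  rw [IsNorm.Space.finrank_eq] at hTcard
  exact_mod_cast hTcard.trans
    (max_le (one_le_pow₀ one_le_two) (pow_le_pow_of_mul_logb_le one_lt_two (by positivity) hlog))
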